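/- arXiv:2401.13811 — 2 statements merged into one kernel-verified Lean document; each statement's English description precedes it below -/
import Mathlib

section
/- Let ε be defined as in the paper. For all integers n ≥ 1, 0 ≤ k ≤ n-1, and 0 ≤ p ≤ n-k, the identity Σ_{j=p+k}^{n} s(n,j)·ε(j,k,p) = s(n-p, k) holds. -/
open Finset

/-- Stirling numbers of the second kind. -/
def S2 : ℕ → ℕ → ℕ
  | 0, 0 => 1
  | 0, _ + 1 => 0
  | _ + 1, 0 => 0
  | n + 1, k + 1 => S2 n k + (k + 1) * S2 n (k + 1)

/-- Signed Stirling numbers of the first kind. -/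
def s1 : ℕ → ℕ → ℤ
  | 0, 0 => 1
  | 0, _ + 1 => 0
  | n + 1, 0 => -(n : ℤ) * s1 n 0
  | n + 1, k + 1 => s1 n k - (n : ℤ) * s1 n (k + 1)

/-- The triple-indexed array ζ(n,k,j) of the paper. -/
def zeta (n k j : ℕ) : ℕ :=
  if j = 0 then (if n = k + 1 then 1 else 0)
  else if j = 1 then Nat.choose (n - 1) (k + 1)
  else ∑ m ∈ Finset.range (n - k - j), j ^ m * Nat.choose (k + m) k * S2 (n - 1 - k - m) j

/-- The triple-indexed array ε(n,k,j) of the paper. -/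
def eps (n k j : ℕ) : ℕ :=
  if 1 ≤ n ∧ k ≤ n ∧ j = n - k then 1
  else if j = 0 then 0
  else if j = 1 then Nat.choose (n - 1) k
  else ∑ m ∈ Finset.range (n - k - j + 1),
    j ^ m * Nat.choose (k + m) k * S2 (n - 1 - k - m) (j - 1)

lemma sum_Icc_range (f : ℕ → ℤ) (m n : ℕ) :
    ∑ i ∈ Icc m n, f i = ∑ i ∈ range (n + 1 - m), f (m + i) := by
  rw [← Finset.Ico_add_one_right_eq_Icc, Finset.sum_Ico_eq_sum_range]

lemma s1_succ_succ (n k : ℕ) : s1 (n+1) (k+1) = s1 n k - (n : ℤ) * s1 n (k+1) := by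
  simp [s1]

lemma S2_succ_succ (n k : ℕ) : S2 (n+1) (k+1) = S2 n k + (k+1) * S2 n (k+1) := by
  simp [S2]

lemma s1_gt : ∀ n j, n < j → s1 n j = 0
  | 0, _+1, _ => rfl
  | n+1, j+1, h => by
    rw [s1_succ_succ, s1_gt n j (by omega), s1_gt n (j+1) (by omega)]; ring

lemma s1_self : ∀ n, s1 n n = 1
  | 0 => rfl
  | n+1 => by rw [s1_succ_succ, s1_self n, s1_gt n (n+1) (by omega)]; ring

lemma s1_zero : ∀ n, s1 (n+1) 0 = 0
  | 0 => by simp [s1]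
  | n+1 => by show -(((n:ℤ))+1) * s1 (n+1) 0 = 0; rw [s1_zero n]; ring

lemma S2_gt : ∀ n j, n < j → S2 n j = 0
  | 0, _+1, _ => rfl
  | n+1, j+1, h => by
    rw [S2_succ_succ, S2_gt n j (by omega), S2_gt n (j+1) (by omega)]; simp

lemma S2_self : ∀ n, S2 n n = 1
  | 0 => rfl
  | n+1 => by rw [S2_succ_succ, S2_self n, S2_gt n (n+1) (by omega)]; simp

lemma S2_zero (n : ℕ) : S2 (n+1) 0 = 0 := rfl

lemma S2_one : ∀ n, S2 (n+1) 1 = 1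
  | 0 => rfl
  | n+1 => by rw [S2_succ_succ, S2_zero, S2_one n]

lemma S2_sum : ∀ j p, 1 ≤ p → p ≤ j →
    S2 j p = ∑ m ∈ range (j - p + 1), p ^ m * S2 (j - 1 - m) (p - 1) := by
  intro j
  induction j with
  | zero => intro p h1 h2; omega
  | succ t ih =>
    intro p h1 h2
    rcases Nat.lt_or_ge t p with h | h
    · have hp : p = t + 1 := by omega
      subst hp
      simp [S2_self]
    · obtain ⟨q, rfl⟩ : ∃ q, p = q + 1 := ⟨p - 1, by omega⟩
      rw [S2_succ_succ, ih (q+1) h1 h]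
      have e1 : t - (q+1) + 1 = t - q := by omega
      have e2 : t + 1 - (q+1) + 1 = (t - q) + 1 := by omega
      rw [e1, e2, Finset.mul_sum]
      conv_rhs => rw [Finset.sum_range_succ']
      rw [add_comm]
      congr 1
      · apply Finset.sum_congr rfl
        intro m hm
        have e3 : t + 1 - 1 - (m+1) = t - 1 - m := by omega
        rw [e3, pow_succ]; ring
      · simp


lemma eps_one (i k : ℕ) : eps i k 1 = Nat.choose (i - 1) k := by
  rw [eps]
  by_cases hc : 1 ≤ i ∧ k ≤ i ∧ 1 = i - k
  · rw [if_pos hc, show i - 1 = k from by omega, Nat.choose_self]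
  · rw [if_neg hc, if_neg one_ne_zero, if_pos rfl]

lemma eps_lt (i k p : ℕ) (hk : 1 ≤ k) (hlt : i < p + k) : eps i k p = 0 := by
  rw [eps]
  have hc : ¬(1 ≤ i ∧ k ≤ i ∧ p = i - k) := by rintro ⟨h1, h2, h3⟩; omega
  rw [if_neg hc]
  by_cases h0 : p = 0
  · rw [if_pos h0]
  rw [if_neg h0]
  by_cases h1 : p = 1
  · rw [if_pos h1]; exact Nat.choose_eq_zero_of_lt (by omega)
  rw [if_neg h1]
  rw [show i - k - p = 0 from by omega, Finset.sum_range_one]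
  simp only [pow_zero, one_mul, Nat.add_zero, Nat.choose_self, Nat.sub_zero]
  rw [S2_gt _ _ (by omega)]

lemma eps_zero_k (j p : ℕ) (hj : 1 ≤ j) : eps j 0 p = S2 j p := by
  rw [eps]
  by_cases h : p = j
  · rw [if_pos ⟨hj, Nat.zero_le j, by omega⟩, h, S2_self]
  rw [if_neg (by rintro ⟨_, _, h3⟩; omega)]
  by_cases h0 : p = 0
  · subst h0
    rw [if_pos rfl]
    obtain ⟨j', rfl⟩ : ∃ j', j = j' + 1 := ⟨j - 1, by omega⟩
    rw [S2_zero]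
  rw [if_neg h0]
  by_cases h1 : p = 1
  · subst h1
    rw [if_pos rfl]
    obtain ⟨j', rfl⟩ : ∃ j', j = j' + 1 := ⟨j - 1, by omega⟩
    rw [S2_one]; simp
  rw [if_neg h1]
  rcases Nat.lt_or_ge j p with hjp | hjp
  · rw [show j - 0 - p = 0 from by omega, Finset.sum_range_one]
    simp only [pow_zero, one_mul, Nat.add_zero, Nat.choose_self, Nat.sub_zero, zero_add]
    rw [S2_gt _ _ (by omega), S2_gt _ _ (by omega)]
  · rw [S2_sum j p (by omega) hjp]
    apply Finset.sum_congr (by rw [Nat.sub_zero])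
    intro m hm
    simp

lemma eps_formula (i k p : ℕ) (h2 : 2 ≤ p) (hle : p + k ≤ i) :
    eps i k p = ∑ m ∈ range (i - k - p + 1),
      p ^ m * Nat.choose (k + m) k * S2 (i - 1 - k - m) (p - 1) := by
  rw [eps]
  by_cases hc : p = i - k
  · rw [if_pos ⟨by omega, by omega, hc⟩]
    rw [show i - k - p = 0 from by omega, Finset.sum_range_one]
    simp only [pow_zero, one_mul, Nat.add_zero, Nat.choose_self, Nat.sub_zero]
    rw [show i - 1 - k = p - 1 from by omega, S2_self]
  · rw [if_neg (by rintro ⟨_, _, h3⟩; exact hc h3), if_neg (by omega), if_neg (by omega)]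

lemma eps_rec (i k p : ℕ) (hp : 1 ≤ p) (hle : p + (k+1) ≤ i + 1) :
    eps (i+1) (k+1) p = eps i k p + p * eps i (k+1) p := by
  rcases Nat.lt_or_ge p 2 with h2 | h2
  · have hp1 : p = 1 := by omega
    subst hp1
    rw [eps_one, eps_one, eps_one]
    obtain ⟨i', rfl⟩ : ∃ i', i = i' + 1 := ⟨i - 1, by omega⟩
    simp only [Nat.add_sub_cancel]
    rw [Nat.choose_succ_succ]
    ring
  · by_cases hb : i + 1 = p + (k+1)
    · rw [eps, if_pos ⟨by omega, by omega, by omega⟩]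
      rw [eps_lt i (k+1) p (by omega) (by omega)]
      have h1 : eps i k p = 1 := by
        rw [eps, if_pos ⟨by omega, by omega, by omega⟩]
      rw [h1]; simp
    · have hle' : p + (k+1) ≤ i := by omega
      rw [eps_formula (i+1) (k+1) p h2 (by omega), eps_formula i k p h2 (by omega),
        eps_formula i (k+1) p h2 hle']
      have e1 : i + 1 - (k+1) - p + 1 = (i - (k+1) - p + 1) + 1 := by omega
      have e2 : i - k - p + 1 = (i - (k+1) - p + 1) + 1 := by omega
      rw [e1, e2]
      have expand : ∀ m ∈ range ((i - (k+1) - p + 1) + 1),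
          p ^ m * Nat.choose (k+1+m) (k+1) * S2 (i+1-1-(k+1)-m) (p-1)
            = p ^ m * Nat.choose (k+m) k * S2 (i-1-k-m) (p-1)
              + p ^ m * Nat.choose (k+m) (k+1) * S2 (i-(k+1)-m) (p-1) := by
        intro m hm
        have hc : Nat.choose (k+1+m) (k+1) = Nat.choose (k+m) k + Nat.choose (k+m) (k+1) := by
          rw [show k+1+m = (k+m)+1 from by omega]
          exact Nat.choose_succ_succ (k+m) k
        have hs : i+1-1-(k+1)-m = i-1-k-m := by omega
        have hs2 : i-1-k-m = i-(k+1)-m := by omega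
        rw [hc, hs, hs2]; ring
      rw [Finset.sum_congr rfl expand, Finset.sum_add_distrib]
      congr 1
      conv_lhs => rw [Finset.sum_range_succ']
      rw [show Nat.choose (k+0) (k+1) = 0 from Nat.choose_eq_zero_of_lt (by omega)]
      simp only [mul_zero, zero_mul, add_zero]
      rw [Finset.mul_sum]
      apply Finset.sum_congr rfl
      intro m hm
      rw [show i-(k+1)-(m+1) = i-1-(k+1)-m from by omega, pow_succ,
        show k+(m+1) = k+1+m from by omega]
      ring

lemma orth : ∀ t q, q ≤ t →
    ∑ i ∈ Icc q t, s1 t i * (S2 i q : ℤ) = if t = q then 1 else 0 := by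
  intro t
  induction t with
  | zero =>
    intro q hq
    obtain rfl : q = 0 := by omega
    simp [s1, S2]
  | succ t ih =>
    intro q hq
    rcases Nat.eq_or_lt_of_le hq with rfl | hq'
    · simp [s1_self, S2_self]
    · have hqt : q ≤ t := by omega
      rw [if_neg (by omega)]
      cases q with
      | zero =>
        rw [sum_Icc_range]
        simp only [Nat.sub_zero, Nat.zero_add]
        rw [Finset.sum_range_succ']
        have hz : ∀ i ∈ range (t+1), s1 (t+1) (i+1) * ((S2 (i+1) 0 : ℕ) : ℤ) = 0 := by
          intro i _; rw [S2_zero]; simp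
        rw [Finset.sum_congr rfl hz, Finset.sum_const_zero, s1_zero]
        simp
      | succ r =>
        rw [sum_Icc_range, show t + 1 + 1 - (r+1) = (t - r) + 1 from by omega]
        have step : ∀ i ∈ range ((t - r) + 1),
            s1 (t+1) (r+1+i) * (S2 (r+1+i) (r+1) : ℤ)
            = s1 t (r+i) * (S2 (r+i) r : ℤ)
              + (r+1 : ℤ) * (s1 t (r+i) * (S2 (r+i) (r+1) : ℤ))
              - (t : ℤ) * (s1 t (r+1+i) * (S2 (r+1+i) (r+1) : ℤ)) := by
          intro i _
          have h1 : s1 (t+1) (r+1+i) = s1 t (r+i) - (t:ℤ) * s1 t (r+1+i) := by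
            rw [show r+1+i = (r+i)+1 from by omega, s1_succ_succ]
          have h2 : S2 (r+1+i) (r+1) = S2 (r+i) r + (r+1) * S2 (r+i) (r+1) := by
            rw [show r+1+i = (r+i)+1 from by omega, S2_succ_succ]
          rw [h1, h2]; push_cast; ring
        rw [Finset.sum_congr rfl step, Finset.sum_sub_distrib, Finset.sum_add_distrib]
        have hA : ∑ i ∈ range ((t - r) + 1), s1 t (r+i) * (S2 (r+i) r : ℤ) = 0 := by
          rw [show (t - r) + 1 = t + 1 - r from by omega, ← sum_Icc_range (fun i => s1 t i * (S2 i r : ℤ))]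
          rw [ih r (by omega), if_neg (by omega)]
        have hD : ∑ i ∈ range (t - r), s1 t (r+1+i) * (S2 (r+1+i) (r+1) : ℤ)
            = if t = r + 1 then 1 else 0 := by
          rw [show t - r = t + 1 - (r+1) from by omega,
            ← sum_Icc_range (fun i => s1 t i * (S2 i (r+1) : ℤ))]
          exact ih (r+1) (by omega)
        have hB : ∑ i ∈ range ((t - r) + 1), s1 t (r+i) * (S2 (r+i) (r+1) : ℤ)
            = if t = r + 1 then 1 else 0 := by
          rw [Finset.sum_range_succ']
          rw [show S2 (r+0) (r+1) = 0 from S2_gt _ _ (by omega)]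
          rw [← hD]
          simp only [Nat.cast_zero, mul_zero, add_zero]
          apply Finset.sum_congr rfl
          intro i _
          rw [show r + (i+1) = r+1+i from by omega]
        have hC : ∑ i ∈ range ((t - r) + 1), s1 t (r+1+i) * (S2 (r+1+i) (r+1) : ℤ)
            = if t = r + 1 then 1 else 0 := by
          rw [Finset.sum_range_succ, show r+1+(t-r) = t+1 from by omega,
            s1_gt t (t+1) (by omega), hD]
          simp
        rw [hA, ← Finset.mul_sum, hB, ← Finset.mul_sum, hC]
        by_cases ht : t = r + 1 <;> simp [ht]

lemma main_aux : ∀ n k p, 1 ≤ p → k + p ≤ n →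
    ∑ j ∈ Icc (p + k) n, s1 n j * (eps j k p : ℤ) = s1 (n - p) k := by
  intro n
  induction n with
  | zero => intro k p hp hkp; omega
  | succ m ih =>
    intro k p hp hkp
    cases k with
    | zero =>
      have step : ∀ j ∈ Icc (p + 0) (m+1), s1 (m+1) j * (eps j 0 p : ℤ)
          = s1 (m+1) j * (S2 j p : ℤ) := by
        intro j hj
        rw [mem_Icc] at hj
        rw [eps_zero_k j p (by omega)]
      rw [Finset.sum_congr rfl step, Nat.add_zero, orth (m+1) p (by omega)]
      split_ifs with h
      · rw [show m + 1 - p = 0 from by omega]; rfl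
      · obtain ⟨d, hd⟩ : ∃ d, m + 1 - p = d + 1 := ⟨m - p, by omega⟩
        rw [hd, s1_zero]
    | succ k' =>
      by_cases hbase : m + 1 = p + (k'+1)
      · rw [show p + (k'+1) = m + 1 from hbase.symm, Finset.Icc_self, Finset.sum_singleton,
          s1_self, eps, if_pos ⟨by omega, by omega, by omega⟩,
          show m + 1 - p = k' + 1 from by omega, s1_self]
        norm_num
      · have hm : p + (k'+1) ≤ m := by omega
        rw [show p + (k'+1) = (p + k') + 1 from by omega]
        rw [sum_Icc_range, show m + 1 + 1 - ((p+k')+1) = (m - (p+k')) + 1 from by omega]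
        have step : ∀ i ∈ range ((m - (p+k')) + 1),
            s1 (m+1) ((p+k')+1+i) * (eps ((p+k')+1+i) (k'+1) p : ℤ)
            = s1 m ((p+k')+i) * (eps ((p+k')+i) k' p : ℤ)
              + (p:ℤ) * (s1 m ((p+k')+i) * (eps ((p+k')+i) (k'+1) p : ℤ))
              - (m:ℤ) * (s1 m ((p+k')+1+i) * (eps ((p+k')+1+i) (k'+1) p : ℤ)) := by
          intro i _
          have h1 : s1 (m+1) ((p+k')+1+i) = s1 m ((p+k')+i) - (m:ℤ) * s1 m ((p+k')+1+i) := by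
            rw [show (p+k')+1+i = ((p+k')+i)+1 from by omega, s1_succ_succ]
          have h2 : eps (((p+k')+i)+1) (k'+1) p
              = eps ((p+k')+i) k' p + p * eps ((p+k')+i) (k'+1) p :=
            eps_rec ((p+k')+i) k' p hp (by omega)
          rw [h1, show (p+k')+1+i = ((p+k')+i)+1 from by omega, h2]
          push_cast; ring
        rw [Finset.sum_congr rfl step, Finset.sum_sub_distrib, Finset.sum_add_distrib]
        have hA : ∑ i ∈ range ((m - (p+k')) + 1), s1 m ((p+k')+i) * (eps ((p+k')+i) k' p : ℤ)
            = s1 (m - p) k' := by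
          rw [show (m - (p+k')) + 1 = m + 1 - (p + k') from by omega,
            ← sum_Icc_range (fun j => s1 m j * (eps j k' p : ℤ))]
          exact ih k' p hp (by omega)
        have hD : ∑ i ∈ range (m - (p+k')), s1 m ((p+k')+1+i) * (eps ((p+k')+1+i) (k'+1) p : ℤ)
            = s1 (m - p) (k'+1) := by
          rw [show m - (p+k') = m + 1 - ((p+k')+1) from by omega,
            ← sum_Icc_range (fun j => s1 m j * (eps j (k'+1) p : ℤ)),
            show (p+k')+1 = p + (k'+1) from by omega]
          exact ih (k'+1) p hp (by omega)
        have hB : ∑ i ∈ range ((m - (p+k')) + 1), s1 m ((p+k')+i) * (eps ((p+k')+i) (k'+1) p : ℤ)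
            = s1 (m - p) (k'+1) := by
          rw [Finset.sum_range_succ',
            show eps ((p+k')+0) (k'+1) p = 0 from eps_lt _ _ _ (by omega) (by omega),
            ← hD]
          simp only [Nat.cast_zero, mul_zero, add_zero]
          apply Finset.sum_congr rfl
          intro i _
          rw [show (p+k') + (i+1) = (p+k')+1+i from by omega]
        have hC : ∑ i ∈ range ((m - (p+k')) + 1),
            s1 m ((p+k')+1+i) * (eps ((p+k')+1+i) (k'+1) p : ℤ) = s1 (m - p) (k'+1) := by
          rw [Finset.sum_range_succ, show (p+k')+1+(m-(p+k')) = m + 1 from by omega,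
            s1_gt m (m+1) (by omega), hD]
          simp
        rw [hA, ← Finset.mul_sum, hB, ← Finset.mul_sum, hC]
        rw [show m + 1 - p = (m - p) + 1 from by omega, s1_succ_succ,
          Nat.cast_sub (show p ≤ m from by omega)]
        ring


theorem stirling1_eps_sum (n k p : ℕ) (hn : 1 ≤ n) (hk : k ≤ n - 1) (hp : p ≤ n - k) :
    ∑ j ∈ Icc (p + k) n, s1 n j * (eps j k p : ℤ) = s1 (n - p) k := by
  rcases Nat.eq_zero_or_pos p with rfl | hp1
  · rw [Nat.zero_add, Nat.sub_zero]
    rw [Finset.sum_eq_single k]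
    · cases k with
      | zero =>
        have h0 : eps 0 0 0 = 0 := by rw [eps]; norm_num
        obtain ⟨n', rfl⟩ : ∃ n', n = n' + 1 := ⟨n - 1, by omega⟩
        rw [h0, s1_zero]
        simp
      | succ k' =>
        rw [eps, if_pos ⟨by omega, le_rfl, by omega⟩]
        simp
    · intro j hj hne
      rw [mem_Icc] at hj
      have h0 : eps j k 0 = 0 := by
        rw [eps, if_neg (by rintro ⟨_, _, h3⟩; omega), if_pos rfl]
      rw [h0]; simp
    · intro h
      exact absurd (mem_Icc.mpr ⟨le_rfl, by omega⟩) h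
  · exact main_aux n k p hp1 (by omega)
end

section
/- Fix an integer n ≥ 2 and nonzero complex numbers c, a_n. If complex numbers a_1, …, a_{n-1} satisfy Σ_{j=p}^{n} a_j S(j,p) c^{j-p} = 0 for every 1 ≤ p ≤ n-1, then a_j = a_n c^{n-j} s(n,j) for all 1 ≤ j ≤ n. -/
open Finset

lemma S2_zero_of_lt : ∀ j p, j < p → S2 j p = 0
  | 0, _ + 1, _ => rfl
  | j + 1, p + 1, h => by
    have h1 : j < p := Nat.lt_of_succ_lt_succ h
    simp [S2, S2_zero_of_lt j p h1, S2_zero_of_lt j (p+1) (Nat.lt_succ_of_lt h1)]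

lemma S2_diag : ∀ j, S2 j j = 1
  | 0 => rfl
  | j + 1 => by simp [S2, S2_diag j, S2_zero_of_lt j (j+1) (Nat.lt_succ_self j)]

lemma s1_zero_of_lt : ∀ j p, j < p → s1 j p = 0
  | 0, _ + 1, _ => rfl
  | j + 1, p + 1, h => by
    have h1 : j < p := Nat.lt_of_succ_lt_succ h
    simp [s1, s1_zero_of_lt j p h1, s1_zero_of_lt j (p+1) (Nat.lt_succ_of_lt h1)]

lemma s1_diag : ∀ j, s1 j j = 1
  | 0 => rfl
  | j + 1 => by
    simp [s1, s1_diag j, s1_zero_of_lt j (j+1) (Nat.lt_succ_self j)]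

lemma s1_zero_succ : ∀ n, s1 (n + 1) 0 = 0
  | 0 => by norm_num [s1]
  | n + 1 => by rw [show s1 (n+2) 0 = -(↑(n+1) : ℤ) * s1 (n+1) 0 from rfl, s1_zero_succ n]; ring

lemma stirling_orth (n p : ℕ) :
    ∑ j ∈ range (n+1), s1 n j * (S2 j p : ℤ) = if n = p then 1 else 0 := by
  induction n generalizing p with
  | zero =>
    cases p with
    | zero => simp [s1, S2]
    | succ q => simp [s1, S2]
  | succ n ih =>
    rw [Finset.sum_range_succ']
    have e1 : ∀ j, s1 (n+1) (j+1) = s1 n j - (n:ℤ) * s1 n (j+1) := fun j => rfl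
    have e0 : s1 (n+1) 0 = -(n:ℤ) * s1 n 0 := rfl
    simp only [e1, e0, sub_mul]
    rw [Finset.sum_sub_distrib]
    have key : ∑ j ∈ range (n+1), (n:ℤ) * s1 n (j+1) * S2 (j+1) p
        = (n:ℤ) * (∑ j ∈ range (n+1), s1 n (j+1) * S2 (j+1) p) := by
      rw [Finset.mul_sum]; congr 1; ext j; ring
    have shift : ∑ j ∈ range (n+1), s1 n (j+1) * (S2 (j+1) p : ℤ)
        = (∑ j ∈ range (n+2), s1 n j * (S2 j p : ℤ)) - s1 n 0 * S2 0 p := by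
      rw [Finset.sum_range_succ' (fun j => s1 n j * (S2 j p : ℤ)) (n+1)]
      ring
    have ext2 : ∑ j ∈ range (n+2), s1 n j * (S2 j p : ℤ)
        = ∑ j ∈ range (n+1), s1 n j * (S2 j p : ℤ) := by
      rw [Finset.sum_range_succ]
      simp [s1_zero_of_lt n (n+1) (Nat.lt_succ_self n)]
    rw [key, shift, ext2, ih p]
    cases p with
    | zero =>
      have hz : ∀ j : ℕ, S2 (j+1) 0 = 0 := fun j => rfl
      simp only [hz, Nat.cast_zero, mul_zero, Finset.sum_const_zero]
      have hS00 : (S2 0 0 : ℤ) = 1 := rfl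
      rw [hS00]
      cases n with
      | zero => norm_num
      | succ m => rw [s1_zero_succ m]; simp
    | succ q =>
      have hrec : ∀ j : ℕ, (S2 (j+1) (q+1) : ℤ) = S2 j q + (q+1) * S2 j (q+1) := by
        intro j; push_cast [S2]; ring
      simp only [hrec]
      have expand : ∑ j ∈ range (n+1), s1 n j * ((S2 j q : ℤ) + (q+1) * S2 j (q+1))
          = (∑ j ∈ range (n+1), s1 n j * S2 j q)
            + (q+1) * ∑ j ∈ range (n+1), s1 n j * (S2 j (q+1) : ℤ) := by
        rw [Finset.mul_sum, ← Finset.sum_add_distrib]; congr 1; ext j; ring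
      rw [expand, ih q, ih (q+1)]
      have hS0 : (S2 0 (q+1) : ℤ) = 0 := rfl
      rw [hS0]
      split_ifs with h1 h2 h3 h4 h5 h6 h7 <;>
        first
          | (exfalso; omega)
          | (subst_vars; push_cast; ring)
          | ring

theorem coefficients_from_stirling_system (n : ℕ) (hn : 2 ≤ n) (c : ℂ) (hc : c ≠ 0)
    (a : ℕ → ℂ) (han : a n ≠ 0)
    (h : ∀ p, 1 ≤ p → p ≤ n - 1 →
      ∑ j ∈ Icc p n, a j * (S2 j p : ℂ) * c ^ (j - p) = 0) :
    ∀ j, 1 ≤ j → j ≤ n → a j = a n * c ^ (n - j) * (s1 n j : ℂ) := by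
  set b : ℕ → ℂ := fun j => a n * c ^ (n - j) * (s1 n j : ℂ) with hb_def
  -- b satisfies the same system
  have hb : ∀ p, 1 ≤ p → p ≤ n - 1 →
      ∑ j ∈ Icc p n, b j * (S2 j p : ℂ) * c ^ (j - p) = 0 := by
    intro p hp1 hp2
    have step1 : ∀ j ∈ Icc p n, b j * (S2 j p : ℂ) * c ^ (j - p)
        = a n * c ^ (n - p) * ((s1 n j : ℂ) * (S2 j p : ℂ)) := by
      intro j hj
      rw [mem_Icc] at hj
      have hpow : c ^ (n - j) * c ^ (j - p) = c ^ (n - p) := by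
        rw [← pow_add]; congr 1; omega
      simp only [hb_def]
      calc a n * c ^ (n - j) * (s1 n j : ℂ) * (S2 j p : ℂ) * c ^ (j - p)
          = a n * (c ^ (n - j) * c ^ (j - p)) * ((s1 n j : ℂ) * (S2 j p : ℂ)) := by ring
        _ = a n * c ^ (n - p) * ((s1 n j : ℂ) * (S2 j p : ℂ)) := by rw [hpow]
    rw [Finset.sum_congr rfl step1, ← Finset.mul_sum]
    have hsum : ∑ j ∈ Icc p n, (s1 n j : ℂ) * (S2 j p : ℂ) = 0 := by
      have hsub : Icc p n ⊆ range (n + 1) := by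
        intro x hx; rw [mem_Icc] at hx; rw [mem_range]; omega
      have hext : ∑ j ∈ range (n + 1), (s1 n j : ℂ) * (S2 j p : ℂ)
          = ∑ j ∈ Icc p n, (s1 n j : ℂ) * (S2 j p : ℂ) := by
        refine (Finset.sum_subset hsub ?_).symm
        intro x hx hnx
        rw [mem_range] at hx
        rw [mem_Icc] at hnx
        have hxp : x < p := by omega
        rw [S2_zero_of_lt x p hxp]
        simp
      rw [← hext]
      have := stirling_orth n p
      have hcast : ∑ j ∈ range (n + 1), (s1 n j : ℂ) * (S2 j p : ℂ)
          = ((∑ j ∈ range (n + 1), s1 n j * (S2 j p : ℤ) : ℤ) : ℂ) := by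
        push_cast; rfl
      rw [hcast, this, if_neg (by omega)]
      simp
    rw [hsum, mul_zero]
  -- the difference satisfies the homogeneous system
  have hd : ∀ p, 1 ≤ p → p ≤ n - 1 →
      ∑ j ∈ Icc p n, (a j - b j) * (S2 j p : ℂ) * c ^ (j - p) = 0 := by
    intro p hp1 hp2
    have : ∑ j ∈ Icc p n, (a j - b j) * (S2 j p : ℂ) * c ^ (j - p)
        = (∑ j ∈ Icc p n, a j * (S2 j p : ℂ) * c ^ (j - p))
          - ∑ j ∈ Icc p n, b j * (S2 j p : ℂ) * c ^ (j - p) := by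
      rw [← Finset.sum_sub_distrib]; congr 1; ext j; ring
    rw [this, h p hp1 hp2, hb p hp1 hp2, sub_zero]
  have hbn : b n = a n := by
    simp [hb_def, s1_diag n]
  have claim : ∀ m, ∀ j, 1 ≤ j → j ≤ n → n - m ≤ j → a j = b j := by
    intro m
    induction m with
    | zero =>
      intro j h1 h2 h3
      have : j = n := by omega
      subst this; exact hbn.symm
    | succ m ih =>
      intro j h1 h2 h3
      by_cases hcase : n - m ≤ j
      · exact ih j h1 h2 hcase
      · have hjlt : j < n - m := by omega
        have hjn : j ≤ n - 1 := by omega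
        have hsum := hd j h1 hjn
        have heq : ∑ j' ∈ Icc j n, (a j' - b j') * (S2 j' j : ℂ) * c ^ (j' - j)
            = a j - b j := by
          rw [Finset.sum_eq_single j]
          · rw [S2_diag j, Nat.sub_self]
            simp
          · intro j' hj' hne
            rw [mem_Icc] at hj'
            have hge : n - m ≤ j' := by omega
            have : a j' = b j' := ih j' (by omega) hj'.2 hge
            rw [this, sub_self, zero_mul, zero_mul]
          · intro habs
            exfalso; exact habs (mem_Icc.mpr ⟨le_refl j, h2⟩)
        rw [heq] at hsum
        exact sub_eq_zero.mp hsum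
  intro j h1 h2
  exact claim n j h1 h2 (by omega)
end
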